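/- Let c̄ be the smallest symbol of Σ and let w be a word with w[0] = w[1] = c̄ and w[|w|-1] ≠ c̄. Let r be the smallest position of w with w[r] ≠ c̄ (so w[0..r-1] = c̄^r), and let 𝒫 = { c̄^r c : c ∈ Σ, c ≤ w[r] }. Then b₁ = min( { s ∈ Occ_𝒫(w) : suf(w,s) < w } ∪ { |w| } ) - 1, where b₁ = |w₁| - 1 is the ending position in w of the first factor w₁ of CFL(w). -/

import Mathlib

variable {α : Type*}

/-- The rotation `rot(w,i) = w[i..|w|-1] w[0..i-1]`. -/
def rot (w : List α) (i : ℕ) : List α := w.drop i ++ w.take i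

/-- A Lyndon word: a nonempty word strictly smaller than all of its proper rotations. -/
def IsLyndon [LinearOrder α] (w : List α) : Prop :=
  w ≠ [] ∧ ∀ i, 0 < i → i < w.length → w < rot w i

/-- `IsCFL w f` : `f` is the Chen–Fox–Lyndon factorization of `w`, i.e. a
nonincreasing sequence of Lyndon words whose concatenation is `w`. -/
def IsCFL [LinearOrder α] (w : List α) (f : List (List α)) : Prop :=
  f.flatten = w ∧ (∀ x ∈ f, IsLyndon x) ∧ f.Chain' (· ≥ ·)

/-- `u^k` : the `k`-fold concatenation of the word `u`. -/
def listPow (u : List α) (k : ℕ) : List α := (List.replicate k u).flatten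

/-- `P`: the set of nonempty prefixes of Lyndon words. -/
def InP [LinearOrder α] (w : List α) : Prop :=
  w ≠ [] ∧ ∃ u : List α, IsLyndon (w ++ u)

/-- `P' = P ∪ { c^k : k ≥ 2 }` where `c` is the maximum symbol of the alphabet. -/
def InP' [LinearOrder α] (w : List α) : Prop :=
  InP w ∨ ∃ (c : α) (k : ℕ), 2 ≤ k ∧ (∀ a : α, a ≤ c) ∧ w = List.replicate k c

/-- A border of `w`: a proper prefix of `w` that is also a suffix of `w`. -/
def IsBorder (b w : List α) : Prop := b <+: w ∧ b <:+ w ∧ b.length < w.length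

/-- The length of the longest common prefix of two words. -/
def lcpLen [DecidableEq α] : List α → List α → ℕ
  | a :: u, b :: v => if a = b then lcpLen u v + 1 else 0
  | _, _ => 0

/-!
The first factor `w₁` is a Lyndon word, so it is smaller than each of its proper suffixes at a
position where they differ; hence `suf(w,s) > w` for `0 < s < |w₁|`. Conversely
`suf(w,|w₁|) = w₂⋯wₘ < w` because every factor is at most `w₁`, and `w₂` begins with `c̄ʳc` for
some `c ≤ w[r]`: it is at most `w₁ = c̄ʳ w[r] ⋯`, and it is not a power of `c̄`, for otherwise so
would be `w₂⋯wₘ` (every later factor is at most `w₂`), against `w[|w|-1] ≠ c̄`. The same argument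
shows `r < |w₁|`.
-/

theorem take_eq_replicate_of_getD {c : α} {w : List α} {r : ℕ}
    (h : ∀ t < r, w.getD t c = c) : w.take r = List.replicate (min r w.length) c := by
  refine List.eq_replicate_iff.2 ⟨List.length_take, fun b hb => ?_⟩
  obtain ⟨i, hi, rfl⟩ := List.mem_iff_getElem.1 hb
  rw [List.length_take] at hi
  rw [List.getElem_take, ← List.getD_eq_getElem w c]
  exact h i (by omega)

section Lex

variable [LinearOrder α]

theorem append_lt_append_left_iff {s x y : List α} : s ++ x < s ++ y ↔ x < y := by
  induction s with
  | nil => rfl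
  | cons a s ih => simpa [List.cons_lt_cons_iff] using ih

/-- `x` is smaller than `y` at the first position where they differ, neither being a prefix of
the other. -/
def MismatchLT (x y : List α) : Prop := ∀ s t : List α, x ++ s < y ++ t

namespace MismatchLT

variable {x y z : List α}

theorem lt (h : MismatchLT x y) : x < y := by simpa using h [] []

theorem not_isPrefix (h : MismatchLT x y) : ¬ x <+: y := by
  rintro ⟨t, rfl⟩
  exact lt_irrefl (x ++ t) (by simpa using h t [])

theorem trans (h₁ : MismatchLT x y) (h₂ : MismatchLT y z) : MismatchLT x z :=
  fun s t => (h₁ s []).trans (by simpa using h₂ [] t)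

theorem append_right (h : MismatchLT x y) (t : List α) : MismatchLT x (y ++ t) :=
  fun s t' => by simpa using h s (t ++ t')

theorem of_append_left (h : MismatchLT (z ++ x) (z ++ y)) : MismatchLT x y :=
  fun s t => append_lt_append_left_iff.1 (by simpa using h s t)

end MismatchLT

/-- `List.cons_le_cons_iff` is about core's `≤` on lists, not Mathlib's `List.LE'`. -/
theorem cons_le_cons_iff {a b : α} {x y : List α} : a :: x ≤ b :: y ↔ a < b ∨ a = b ∧ x ≤ y := by
  simp only [le_iff_lt_or_eq, List.cons_lt_cons_iff, List.cons.injEq]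
  constructor
  · rintro ((h | ⟨rfl, h⟩) | ⟨rfl, rfl⟩)
    exacts [Or.inl h, Or.inr ⟨rfl, Or.inl h⟩, Or.inr ⟨rfl, Or.inr rfl⟩]
  · rintro (h | ⟨rfl, h | rfl⟩)
    exacts [Or.inl (Or.inl h), Or.inl (Or.inr ⟨rfl, h⟩), Or.inr ⟨rfl, rfl⟩]

theorem isPrefix_or_mismatchLT_of_lt {x y : List α} (h : x < y) : x <+: y ∨ MismatchLT x y := by
  induction x generalizing y with
  | nil => exact Or.inl (List.nil_prefix)
  | cons a x ih =>
    rcases y with _ | ⟨b, y⟩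
    · exact absurd h (List.not_lt_nil _)
    rcases List.cons_lt_cons_iff.1 h with hab | ⟨rfl, hxy⟩
    · exact Or.inr fun s t => List.cons_lt_cons_iff.2 (Or.inl hab)
    · rcases ih hxy with hpre | hmis
      · exact Or.inl (List.cons_prefix_cons.2 ⟨rfl, hpre⟩)
      · exact Or.inr fun s t => List.cons_lt_cons_iff.2 (Or.inr ⟨rfl, hmis s t⟩)

theorem isPrefix_or_mismatchLT_of_le {x y : List α} (h : x ≤ y) : x <+: y ∨ MismatchLT x y := by
  rcases h.lt_or_eq with hlt | rfl
  exacts [isPrefix_or_mismatchLT_of_lt hlt, Or.inl (List.prefix_refl x)]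

theorem forall_eq_of_le_replicate {c : α} (hc : ∀ a, c ≤ a) :
    ∀ {k : ℕ} {y : List α}, y ≤ List.replicate k c → ∀ b ∈ y, b = c
  | _, [], _, _, hb => absurd hb List.not_mem_nil
  | 0, a :: y, h, _, _ => absurd h (not_le.2 (List.nil_lt_cons a y))
  | k + 1, a :: y, h, b, hb => by
    rcases cons_le_cons_iff.1 h with hac | ⟨rfl, hy⟩
    · exact absurd hac (not_lt.2 (hc a))
    · rcases List.mem_cons.1 hb with rfl | hb
      exacts [rfl, forall_eq_of_le_replicate hc hy b hb]

theorem exists_prefix_of_le {c d : α} (hc : ∀ a, c ≤ a) :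
    ∀ {r : ℕ} {x y : List α}, List.replicate r c ++ [d] <+: x → y ≤ x → (∃ b ∈ y, b ≠ c) →
      ∃ e ≤ d, List.replicate r c ++ [e] <+: y
  | _, [], _, hx, _, _ => by simp at hx
  | _, _, [], _, _, hy => by simp at hy
  | 0, d' :: x, e :: y, hx, h, _ => by
    obtain ⟨rfl, -⟩ := List.cons_prefix_cons.1 hx
    refine ⟨e, ?_, by simp⟩
    rcases cons_le_cons_iff.1 h with hlt | ⟨rfl, -⟩
    exacts [hlt.le, le_rfl]
  | r + 1, c' :: x, e :: y, hx, h, ⟨b, hb, hbc⟩ => by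
    rw [List.replicate_succ, List.cons_append] at hx
    obtain ⟨rfl, hx'⟩ := List.cons_prefix_cons.1 hx
    rcases cons_le_cons_iff.1 h with hlt | ⟨rfl, hyx⟩
    · exact absurd hlt (not_lt.2 (hc e))
    have hb' : b ∈ y := (List.mem_cons.1 hb).resolve_left hbc
    obtain ⟨e', he', hpre⟩ := exists_prefix_of_le hc hx' hyx ⟨b, hb', hbc⟩
    exact ⟨e', he', List.cons_prefix_cons.2 ⟨rfl, hpre⟩⟩

end Lex

namespace IsLyndon

variable [LinearOrder α] {u v : List α}

theorem lt_append_swap (h : IsLyndon (u ++ v)) (hu : u ≠ []) (hv : v ≠ []) : u ++ v < v ++ u := by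
  have := h.2 u.length (List.length_pos_iff.2 hu) (by simpa using List.length_pos_iff.2 hv)
  simpa [rot] using this

/-- The prefix case is excluded because a Lyndon word has no proper border. -/
theorem mismatchLT_right (h : IsLyndon (u ++ v)) (hu : u ≠ []) (hv : v ≠ []) :
    MismatchLT (u ++ v) v := by
  have hrot := h.lt_append_swap hu hv
  rcases lt_trichotomy (u ++ v) v with hlt | heq | hgt
  · refine (isPrefix_or_mismatchLT_of_lt hlt).resolve_left fun hpre => hu ?_
    simpa using hpre.length_le
  · exact absurd (by simpa using congrArg List.length heq) hu
  rcases isPrefix_or_mismatchLT_of_lt hgt with ⟨z, hz⟩ | hmis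
  · have hz' : z ≠ [] := by rintro rfl; simp at hz; exact hu hz
    have hzu : z < u := append_lt_append_left_iff.1 (hz ▸ hrot)
    have hlen : z.length = u.length := by
      have := congrArg List.length hz
      simp only [List.length_append] at this
      omega
    rcases isPrefix_or_mismatchLT_of_lt hzu with hpre | hmis
    · exact absurd (hpre.eq_of_length hlen) hzu.ne
    · have hrot' := (hz ▸ h).lt_append_swap hv hz'
      exact absurd (hmis v v) (not_lt.2 (hz ▸ hrot').le)
  · exact absurd (hmis u []) (by simpa using hrot.asymm)

end IsLyndon

section Factors

variable [LinearOrder α] {x : List α} {f : List (List α)}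

theorem flatten_lt_of_mismatchLT (hx : IsLyndon x) (hf : ∀ y ∈ f, IsLyndon y ∧ y ≤ x)
    {t : List α} (ht : MismatchLT x t) : f.flatten < t := by
  induction f generalizing t with
  | nil =>
    rcases t with _ | ⟨a, t⟩
    exacts [absurd ht.lt (List.not_lt_nil x), List.nil_lt_cons a t]
  | cons y g ih =>
    obtain ⟨hy, hyx⟩ := hf y List.mem_cons_self
    have hg : ∀ y ∈ g, IsLyndon y ∧ y ≤ x := fun y hy => hf y (List.mem_cons_of_mem _ hy)
    rw [List.flatten_cons]
    rcases isPrefix_or_mismatchLT_of_lt (hyx.trans_lt ht.lt) with ⟨t', rfl⟩ | hyt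
    · obtain ⟨x', rfl⟩ : y <+: x := (isPrefix_or_mismatchLT_of_le hyx).resolve_right
        fun hmis => (hmis.trans ht).not_isPrefix (List.prefix_append y t')
      have hx' : x' ≠ [] := by
        rintro rfl
        exact ht.not_isPrefix (by simp)
      exact List.append_left_lt
        (ih hg ((hx.mismatchLT_right hy.1 hx').trans ht.of_append_left))
    · simpa using hyt g.flatten []

theorem flatten_lt_append_flatten (hx : IsLyndon x) (hf : ∀ y ∈ f, IsLyndon y ∧ y ≤ x)
    (hne : f.flatten ≠ []) : f.flatten < x ++ f.flatten := by
  induction f with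
  | nil => exact absurd rfl hne
  | cons y g ih =>
    obtain ⟨hy, hyx⟩ := hf y List.mem_cons_self
    have hg : ∀ y ∈ g, IsLyndon y ∧ y ≤ x := fun y hy => hf y (List.mem_cons_of_mem _ hy)
    rw [List.flatten_cons]
    rcases isPrefix_or_mismatchLT_of_le hyx with ⟨x', rfl⟩ | hmis
    · rw [List.append_assoc]
      refine List.append_left_lt ?_
      rcases eq_or_ne x' [] with rfl | hx'
      · rcases eq_or_ne g.flatten [] with hg' | hg'
        · rcases y with _ | ⟨a, y⟩
          exacts [absurd rfl hy.1, by simp [hg']]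
        · simpa using ih (by simpa using hg) hg'
      · exact flatten_lt_of_mismatchLT hx hg ((hx.mismatchLT_right hy.1 hx').append_right _)
    · exact hmis _ _

end Factors

namespace IsCFL

variable [LinearOrder α] {w x : List α} {f : List (List α)}

theorem flatten_eq (h : IsCFL w (x :: f)) : x ++ f.flatten = w := by
  simpa using h.1

theorem isLyndon_head (h : IsCFL w (x :: f)) : IsLyndon x := h.2.1 x List.mem_cons_self

theorem tail (h : IsCFL w (x :: f)) : IsCFL f.flatten f :=
  ⟨rfl, fun y hy => h.2.1 y (List.mem_cons_of_mem _ hy), h.2.2.tail⟩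

theorem le_head (h : IsCFL w (x :: f)) : ∀ y ∈ x :: f, y ≤ x := by
  have hpair := List.pairwise_cons.1 (List.isChain_iff_pairwise.1 h.2.2)
  intro y hy
  rcases List.mem_cons.1 hy with rfl | hy
  exacts [le_rfl, hpair.1 y hy]

theorem forall_eq_of_head {c : α} (hc : ∀ a, c ≤ a) (h : IsCFL w (x :: f))
    (hx : ∀ b ∈ x, b = c) : ∀ b ∈ w, b = c := by
  intro b hb
  rw [← h.1] at hb
  obtain ⟨y, hy, hb⟩ := List.mem_flatten.1 hb
  have hxc : x = List.replicate x.length c := List.eq_replicate_iff.2 ⟨rfl, hx⟩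
  exact forall_eq_of_le_replicate hc (hxc ▸ h.le_head y hy) b hb

theorem length_le_of_drop_lt {s : ℕ} (h : IsCFL w (x :: f)) (hs : w.drop s < w) :
    x.length ≤ s := by
  by_contra! hsx
  rcases Nat.eq_zero_or_pos s with rfl | hs₀
  · simp at hs
  obtain ⟨u, v, rfl, rfl⟩ : ∃ u v, x = u ++ v ∧ s = u.length :=
    ⟨x.take s, x.drop s, by simp, by simp; omega⟩
  have hu : u ≠ [] := List.length_pos_iff.1 hs₀
  have hv : v ≠ [] := by rintro rfl; simp at hsx
  refine lt_asymm hs ?_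
  rw [← h.flatten_eq, List.append_assoc, List.drop_left]
  simpa using h.isLyndon_head.mismatchLT_right hu hv f.flatten f.flatten

theorem drop_length_lt (h : IsCFL w (x :: f)) (hne : f.flatten ≠ []) : w.drop x.length < w := by
  rw [← h.flatten_eq, List.drop_left]
  exact flatten_lt_append_flatten h.isLyndon_head
    (fun y hy => ⟨h.2.1 y (List.mem_cons_of_mem _ hy), h.le_head y (List.mem_cons_of_mem _ hy)⟩)
    hne

theorem replicate_append_getD_prefix {c : α} {r : ℕ} (hc : ∀ a, c ≤ a) (h : IsCFL w (x :: f))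
    (hw : ∃ b ∈ w, b ≠ c) (hmin : ∀ t < r, w.getD t c = c) :
    List.replicate r c ++ [w.getD r c] <+: x := by
  have hpre : x <+: w := ⟨f.flatten, h.flatten_eq⟩
  have htake := take_eq_replicate_of_getD hmin
  have hrx : r < x.length := by
    by_contra! hle
    have hx : x <+: List.replicate (min r w.length) c :=
      htake ▸ List.prefix_of_prefix_length_le hpre (List.take_prefix r w)
        (by simp [hpre.length_le, hle])
    obtain ⟨b, hb, hbc⟩ := hw
    exact hbc (h.forall_eq_of_head hc (fun b hb => List.eq_of_mem_replicate (hx.subset hb)) b hb)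
  have hrw : r < w.length := hrx.trans_le hpre.length_le
  have hwr : w.take (r + 1) = List.replicate r c ++ [w.getD r c] := by
    rw [List.take_add_one, htake, Nat.min_eq_left hrw.le, List.getElem?_eq_getElem hrw,
      List.getD_eq_getElem w c hrw]
    rfl
  exact List.prefix_of_prefix_length_le (hwr ▸ List.take_prefix _ _) hpre (by simpa using hrx)

theorem exists_prefix_drop_length {c d : α} {r : ℕ} (hc : ∀ a, c ≤ a) (h : IsCFL w (x :: f))
    (hx : List.replicate r c ++ [d] <+: x) (hf : ∃ b ∈ f.flatten, b ≠ c) :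
    ∃ e ≤ d, List.replicate r c ++ [e] <+: w.drop x.length := by
  rw [← h.flatten_eq, List.drop_left]
  rcases f with _ | ⟨y, g⟩
  · simp at hf
  have hy : ∃ b ∈ y, b ≠ c := by
    by_contra! hy
    obtain ⟨b, hb, hbc⟩ := hf
    exact hbc (h.tail.forall_eq_of_head hc hy b hb)
  obtain ⟨e, he, hpre⟩ := exists_prefix_of_le hc hx (h.le_head y (by simp)) hy
  exact ⟨e, he, hpre.trans (by simp)⟩

end IsCFL

theorem cfl_first_factor_occ_general [LinearOrder α] (cbar : α) (hcbar : ∀ a : α, cbar ≤ a)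
    (w : List α) (hw : w ≠ [])
    (hlast : w.getLast hw ≠ cbar)
    (r : ℕ)
    (hrmin : ∀ t, t < r → w.getD t cbar = cbar)
    (w₁ : List α) (f' : List (List α)) (hf : IsCFL w (w₁ :: f')) :
    w₁.length - 1 =
      sInf ({s : ℕ | (∃ c : α, c ≤ w.getD r cbar ∧
          (List.replicate r cbar ++ [c]) <+: w.drop s) ∧ w.drop s < w} ∪
        {w.length}) - 1 := by
  have hpat := hf.replicate_append_getD_prefix hcbar ⟨_, List.getLast_mem hw, hlast⟩ hrmin
  congr 1
  refine (IsLeast.csInf_eq ⟨?_, fun s hs => ?_⟩).symm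
  · rcases eq_or_ne f'.flatten [] with hnil | hne
    · exact Or.inr (by simp [← hf.flatten_eq, hnil])
    have hsuf : f'.flatten <:+ w := ⟨w₁, hf.flatten_eq⟩
    obtain ⟨e, he, hpre⟩ := hf.exists_prefix_drop_length hcbar hpat
      ⟨_, List.getLast_mem hne, hsuf.getLast hne ▸ hlast⟩
    exact Or.inl ⟨⟨e, he, hpre⟩, hf.drop_length_lt hne⟩
  · rcases hs with ⟨-, hlt⟩ | rfl
    exacts [hf.length_le_of_drop_lt hlt, by simp [← hf.flatten_eq]]

/-- For `w` with `w[0] = w[1] = c̄`, `w[|w|-1] ≠ c̄`, `r` the smallest position with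
`w[r] ≠ c̄` and `𝒫 = { c̄^r c : c ≤ w[r] }`:
`b₁ = min({s ∈ Occ_𝒫(w) : suf(w,s) < w} ∪ {|w|}) - 1`, where `b₁ = |w₁| - 1` is the
ending position of the first factor of `CFL(w)`. -/
theorem cfl_first_factor_occ [LinearOrder α] (cbar : α) (hcbar : ∀ a : α, cbar ≤ a)
    (w : List α) (hw : w ≠ [])
    (h01 : w.take 2 = [cbar, cbar]) (hlast : w.getLast hw ≠ cbar)
    (r : ℕ) (hr : r < w.length)
    (hrne : w.getD r cbar ≠ cbar) (hrmin : ∀ t, t < r → w.getD t cbar = cbar)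
    (w₁ : List α) (f' : List (List α)) (hf : IsCFL w (w₁ :: f')) :
    w₁.length - 1 =
      sInf ({s : ℕ | (∃ c : α, c ≤ w.getD r cbar ∧
          (List.replicate r cbar ++ [c]) <+: w.drop s) ∧ w.drop s < w} ∪
        {w.length}) - 1 :=
  cfl_first_factor_occ_general cbar hcbar w hw hlast r hrmin w₁ f' hf
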